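/- arXiv:2206.05954 — 2 statements merged into one kernel-verified Lean document; each statement's English description precedes it below -/
import Mathlib

section
/- Let d, T be positive integers, x_1, …, x_T ∈ ℝ^d, λ > 0, g(θ) = Σ_{s=1}^T σ(x_sᵀθ)·x_s + λθ, and A = Σ_{s=1}^T x_s x_sᵀ + λI. Let θ_1, θ_2 ∈ ℝ^d and suppose c ∈ (0, 1] satisfies σ′(x_sᵀ(θ_2 + u(θ_1 − θ_2))) ≥ c for all s ∈ {1,…,T} and all u ∈ [0,1]. Then for every x ∈ ℝ^d, |xᵀ(θ_1 − θ_2)| ≤ (1/c) · ‖x‖_{A^{−1}} · ‖g(θ_1) − g(θ_2)‖_{A^{−1}}. -/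
/-! Applying the mean value theorem to `u ↦ σ(x_sᵀ(θ₂ + u(θ₁ - θ₂)))` for each `s` gives the
strong monotonicity `c ‖θ₁ - θ₂‖²_A ≤ (θ₁ - θ₂)ᵀ (g θ₁ - g θ₂)`; on the regularisation term this
only needs `c ≤ 1`. Cauchy–Schwarz for the `A⁻¹`-inner product, in the form
`|aᵀ b| = |aᵀ A⁻¹ (A b)| ≤ ‖a‖_{A⁻¹} ‖b‖_A`, first turns this into
`c ‖θ₁ - θ₂‖_A ≤ ‖g θ₁ - g θ₂‖_{A⁻¹}` and then bounds `|xᵀ(θ₁ - θ₂)| ≤ ‖x‖_{A⁻¹} ‖θ₁ - θ₂‖_A`. -/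

open Matrix

/-- The logistic (sigmoid) function `σ(z) = 1 / (1 + exp (-z))`. -/
noncomputable def logistic (z : ℝ) : ℝ := 1 / (1 + Real.exp (-z))

/-- The derivative `σ'` of the logistic function. -/
noncomputable def logistic' (z : ℝ) : ℝ := deriv logistic z

/-- The (semi-)norm `‖v‖_M = √(vᵀ M v)` induced by a matrix `M`. -/
noncomputable def mnorm {d : ℕ} (M : Matrix (Fin d) (Fin d) ℝ) (v : Fin d → ℝ) : ℝ :=
  Real.sqrt (v ⬝ᵥ M *ᵥ v)

lemma inv_mulVec_mulVec_of_isUnit {n R : Type*} [Fintype n] [DecidableEq n] [CommRing R]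
    {A : Matrix n n R} (hA : IsUnit A) (v : n → R) : A⁻¹ *ᵥ A *ᵥ v = v := by
  rw [mulVec_mulVec, nonsing_inv_mul A ((isUnit_iff_isUnit_det A).mp hA), one_mulVec]

section QuadraticForm

variable {d : ℕ}

lemma mnorm_nonneg (M : Matrix (Fin d) (Fin d) ℝ) (v : Fin d → ℝ) : 0 ≤ mnorm M v :=
  Real.sqrt_nonneg _

lemma sq_mnorm {M : Matrix (Fin d) (Fin d) ℝ} (hM : M.PosSemidef) (v : Fin d → ℝ) :
    mnorm M v ^ 2 = v ⬝ᵥ M *ᵥ v := by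
  refine Real.sq_sqrt ?_
  simpa using hM.dotProduct_mulVec_nonneg v

lemma abs_dotProduct_mulVec_le_mnorm_mul_mnorm {M : Matrix (Fin d) (Fin d) ℝ}
    (hM : M.PosSemidef) (a b : Fin d → ℝ) :
    |a ⬝ᵥ M *ᵥ b| ≤ mnorm M a * mnorm M b := by
  let _ := M.toSeminormedAddCommGroup hM
  let _ := M.toInnerProductSpace hM
  have h := abs_real_inner_le_norm a b
  change |(M *ᵥ b) ⬝ᵥ star a| ≤
    √(RCLike.re ((M *ᵥ a) ⬝ᵥ star a)) * √(RCLike.re ((M *ᵥ b) ⬝ᵥ star b)) at h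
  simpa [mnorm, dotProduct_comm] using h

lemma mnorm_inv_mulVec {A : Matrix (Fin d) (Fin d) ℝ} (hA : IsUnit A) (v : Fin d → ℝ) :
    mnorm A⁻¹ (A *ᵥ v) = mnorm A v := by
  rw [mnorm, mnorm, inv_mulVec_mulVec_of_isUnit hA, dotProduct_comm]

lemma abs_dotProduct_le_mnorm_inv_mul_mnorm {A : Matrix (Fin d) (Fin d) ℝ} (hA : A.PosDef)
    (a b : Fin d → ℝ) : |a ⬝ᵥ b| ≤ mnorm A⁻¹ a * mnorm A b := by
  calc |a ⬝ᵥ b| = |a ⬝ᵥ A⁻¹ *ᵥ A *ᵥ b| := by rw [inv_mulVec_mulVec_of_isUnit hA.isUnit]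
    _ ≤ mnorm A⁻¹ a * mnorm A⁻¹ (A *ᵥ b) :=
      abs_dotProduct_mulVec_le_mnorm_mul_mnorm hA.inv.posSemidef a _
    _ = mnorm A⁻¹ a * mnorm A b := by rw [mnorm_inv_mulVec hA.isUnit]

lemma abs_dotProduct_le_of_mul_sq_mnorm_le {A : Matrix (Fin d) (Fin d) ℝ} (hA : A.PosDef)
    {c : ℝ} (hc : 0 < c) {Δ v : Fin d → ℝ} (hmono : c * mnorm A Δ ^ 2 ≤ Δ ⬝ᵥ v)
    (a : Fin d → ℝ) : |a ⬝ᵥ Δ| ≤ (1 / c) * mnorm A⁻¹ a * mnorm A⁻¹ v := by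
  have hΔ : c * mnorm A Δ ≤ mnorm A⁻¹ v := by
    rcases (mnorm_nonneg A Δ).eq_or_lt with h0 | hpos
    · rw [← h0, mul_zero]; exact mnorm_nonneg _ _
    refine le_of_mul_le_mul_right ?_ hpos
    calc c * mnorm A Δ * mnorm A Δ = c * mnorm A Δ ^ 2 := by ring
      _ ≤ |v ⬝ᵥ Δ| := hmono.trans ((dotProduct_comm Δ v).le.trans (le_abs_self _))
      _ ≤ mnorm A⁻¹ v * mnorm A Δ := abs_dotProduct_le_mnorm_inv_mul_mnorm hA v Δ
  calc |a ⬝ᵥ Δ| ≤ mnorm A⁻¹ a * mnorm A Δ := abs_dotProduct_le_mnorm_inv_mul_mnorm hA a Δ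
    _ ≤ mnorm A⁻¹ a * ((1 / c) * mnorm A⁻¹ v) := by
      gcongr
      · exact mnorm_nonneg _ _
      · rwa [one_div_mul_eq_div, le_div_iff₀' hc]
    _ = (1 / c) * mnorm A⁻¹ a * mnorm A⁻¹ v := by ring

end QuadraticForm

lemma logistic_differentiable : Differentiable ℝ logistic := by
  unfold logistic
  fun_prop (disch := intros; positivity)

lemma mul_sq_le_sub_mul_of_le_deriv {f : ℝ → ℝ} (hf : Differentiable ℝ f) {a b c : ℝ}
    (hc : ∀ u ∈ Set.Icc (0 : ℝ) 1, c ≤ deriv f (a + u * (b - a))) :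
    c * (b - a) ^ 2 ≤ (f b - f a) * (b - a) := by
  set h : ℝ → ℝ := fun u => f (a + u * (b - a))
  have hh : ∀ u, HasDerivAt h (deriv f (a + u * (b - a)) * (b - a)) u := fun u =>
    (hf _).hasDerivAt.comp u (((hasDerivAt_id u).mul_const (b - a)).const_add a |>.congr_deriv
      (one_mul _))
  obtain ⟨ξ, hξ, hslope⟩ := exists_hasDerivAt_eq_slope h _ one_pos
    (fun u _ => (hh u).continuousAt.continuousWithinAt) (fun u _ => hh u)
  have hfb : f b - f a = deriv f (a + ξ * (b - a)) * (b - a) := by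
    simpa [h] using hslope.symm
  rw [hfb, mul_assoc, ← sq]
  exact mul_le_mul_of_nonneg_right (hc ξ (Set.Ioo_subset_Icc_self hξ)) (sq_nonneg _)

section RegularizedDesign

variable {ι n : Type*} [Fintype ι] [Fintype n]

def regularizedScore (f : ℝ → ℝ) (x : ι → n → ℝ) (lam : ℝ) (θ : n → ℝ) : n → ℝ :=
  (∑ s, f (x s ⬝ᵥ θ) • x s) + lam • θ

lemma dotProduct_sub_regularizedScore (f : ℝ → ℝ) (x : ι → n → ℝ) (lam : ℝ) (θ₁ θ₂ : n → ℝ) :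
    (θ₁ - θ₂) ⬝ᵥ (regularizedScore f x lam θ₁ - regularizedScore f x lam θ₂) =
      ∑ s, (f (x s ⬝ᵥ θ₁) - f (x s ⬝ᵥ θ₂)) * (x s ⬝ᵥ θ₁ - x s ⬝ᵥ θ₂) +
        lam * ((θ₁ - θ₂) ⬝ᵥ (θ₁ - θ₂)) := by
  simp only [regularizedScore, add_sub_add_comm, ← Finset.sum_sub_distrib, ← sub_smul,
    ← smul_sub, dotProduct_add, dotProduct_sum, dotProduct_smul, smul_eq_mul, dotProduct_sub,
    dotProduct_comm _ (x _)]

variable [DecidableEq n]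

def regularizedGram (x : ι → n → ℝ) (lam : ℝ) : Matrix n n ℝ :=
  (∑ s, vecMulVec (x s) (x s)) + lam • (1 : Matrix n n ℝ)

lemma posDef_regularizedGram (x : ι → n → ℝ) {lam : ℝ} (hlam : 0 < lam) :
    (regularizedGram x lam).PosDef :=
  PosDef.posSemidef_add
    (posSemidef_sum _ fun s _ => by simpa using posSemidef_vecMulVec_self_star (x s))
    (PosDef.one.smul hlam)

lemma dotProduct_regularizedGram_mulVec (x : ι → n → ℝ) (lam : ℝ) (y : n → ℝ) :
    y ⬝ᵥ regularizedGram x lam *ᵥ y = ∑ s, (x s ⬝ᵥ y) ^ 2 + lam * (y ⬝ᵥ y) := by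
  rw [dotProduct_comm]
  simp only [regularizedGram, add_mulVec, sum_mulVec, vecMulVec_mulVec, op_smul_eq_smul,
    smul_mulVec, one_mulVec, add_dotProduct, sum_dotProduct, smul_dotProduct, smul_eq_mul, sq]

lemma mul_dotProduct_regularizedGram_mulVec_le {f : ℝ → ℝ} (hf : Differentiable ℝ f)
    (x : ι → n → ℝ) {lam c : ℝ} (hlam : 0 ≤ lam) (hc : c ≤ 1) {θ₁ θ₂ : n → ℝ}
    (hderiv : ∀ s, ∀ u ∈ Set.Icc (0 : ℝ) 1, c ≤ deriv f (x s ⬝ᵥ (θ₂ + u • (θ₁ - θ₂)))) :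
    c * ((θ₁ - θ₂) ⬝ᵥ regularizedGram x lam *ᵥ (θ₁ - θ₂)) ≤
      (θ₁ - θ₂) ⬝ᵥ (regularizedScore f x lam θ₁ - regularizedScore f x lam θ₂) := by
  rw [dotProduct_regularizedGram_mulVec, dotProduct_sub_regularizedScore, mul_add,
    Finset.mul_sum]
  have hterm : ∀ s, c * (x s ⬝ᵥ (θ₁ - θ₂)) ^ 2 ≤
      (f (x s ⬝ᵥ θ₁) - f (x s ⬝ᵥ θ₂)) * (x s ⬝ᵥ θ₁ - x s ⬝ᵥ θ₂) := fun s => by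
    rw [dotProduct_sub]
    refine mul_sq_le_sub_mul_of_le_deriv hf fun u hu => ?_
    simpa [dotProduct_add, dotProduct_smul, dotProduct_sub] using hderiv s u hu
  have hreg : c * (lam * ((θ₁ - θ₂) ⬝ᵥ (θ₁ - θ₂))) ≤ lam * ((θ₁ - θ₂) ⬝ᵥ (θ₁ - θ₂)) :=
    mul_le_of_le_one_left (mul_nonneg hlam (dotProduct_self_star_nonneg _)) hc
  exact add_le_add (Finset.sum_le_sum fun s _ => hterm s) hreg

end RegularizedDesign

theorem stmt_3_general (d T : ℕ)
    (x : Fin T → (Fin d → ℝ)) (lam : ℝ) (hlam : 0 < lam)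
    (g : (Fin d → ℝ) → (Fin d → ℝ))
    (hg : ∀ θ, g θ = (∑ s, logistic (x s ⬝ᵥ θ) • x s) + lam • θ)
    (A : Matrix (Fin d) (Fin d) ℝ)
    (hA : A = (∑ s, vecMulVec (x s) (x s)) + lam • (1 : Matrix (Fin d) (Fin d) ℝ))
    (θ1 θ2 : Fin d → ℝ) (c : ℝ) (hc0 : 0 < c) (hc1 : c ≤ 1)
    (hderiv : ∀ s : Fin T, ∀ u ∈ Set.Icc (0:ℝ) 1,
      c ≤ logistic' (x s ⬝ᵥ (θ2 + u • (θ1 - θ2)))) :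
    ∀ xv : Fin d → ℝ,
      |xv ⬝ᵥ (θ1 - θ2)| ≤ (1 / c) * mnorm A⁻¹ xv * mnorm A⁻¹ (g θ1 - g θ2) := by
  obtain rfl : g = regularizedScore logistic x lam := funext hg
  obtain rfl : A = regularizedGram x lam := hA
  have hApd := posDef_regularizedGram x hlam
  refine abs_dotProduct_le_of_mul_sq_mnorm_le hApd hc0 ?_
  rw [sq_mnorm hApd.posSemidef]
  exact mul_dotProduct_regularizedGram_mulVec_le logistic_differentiable x hlam.le hc1 hderiv

/-- If `c ∈ (0,1]` lower-bounds the derivative weights `σ'(x_sᵀ(θ₂ + u(θ₁-θ₂)))` on the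
segment joining `θ₁` and `θ₂`, then for every `x`,
`|xᵀ(θ₁ - θ₂)| ≤ (1/c) ‖x‖_{A⁻¹} ‖g(θ₁) - g(θ₂)‖_{A⁻¹}`. -/
theorem stmt_3 (d T : ℕ) (hd : 0 < d) (hT : 0 < T)
    (x : Fin T → (Fin d → ℝ)) (lam : ℝ) (hlam : 0 < lam)
    (g : (Fin d → ℝ) → (Fin d → ℝ))
    (hg : ∀ θ, g θ = (∑ s, logistic (x s ⬝ᵥ θ) • x s) + lam • θ)
    (A : Matrix (Fin d) (Fin d) ℝ)
    (hA : A = (∑ s, vecMulVec (x s) (x s)) + lam • (1 : Matrix (Fin d) (Fin d) ℝ))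
    (θ1 θ2 : Fin d → ℝ) (c : ℝ) (hc0 : 0 < c) (hc1 : c ≤ 1)
    (hderiv : ∀ s : Fin T, ∀ u ∈ Set.Icc (0:ℝ) 1,
      c ≤ logistic' (x s ⬝ᵥ (θ2 + u • (θ1 - θ2)))) :
    ∀ xv : Fin d → ℝ,
      |xv ⬝ᵥ (θ1 - θ2)| ≤ (1 / c) * mnorm A⁻¹ xv * mnorm A⁻¹ (g θ1 - g θ2) :=
  stmt_3_general d T x lam hlam g hg A hA θ1 θ2 c hc0 hc1 hderiv
end

section
/- (Sufficient ensemble size for optimism.) Let τ > 0, β ≥ 1, δ ∈ (0,1), and set p = exp(−β²)/(4·√π·β), so that 0 < p < 1. Let U_1, …, U_N be independent, identically distributed N(0, τ²) random variables. If N ≥ log(δ) / log(1 − p), then P( max_{1 ≤ n ≤ N} U_n ≥ β·τ ) ≥ 1 − δ. -/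
/-! Rescaling by `τ`, each `U_n` reaches `βτ` with the probability that a standard normal reaches
`β`. That is at least the mass of `[β, β + 1]`, hence at least the density at `β + 1`, which is
`≥ e^{-β²-1}/√(2π) ≥ e^{-β²}/(4√π)` because `(β + 1)²/2 ≤ β² + 1` and `e√2 ≤ 4`; the factor
`1/β ≤ 1` in `p` costs nothing. By independence all `N` of them stay below `βτ` with probability
at most `(1 - p)^N ≤ δ`. -/

open MeasureTheory ProbabilityTheory Set

namespace ProbabilityTheory

lemma gaussianPDFReal_zero_antitoneOn (v : NNReal) :
    AntitoneOn (gaussianPDFReal 0 v) (Ici 0) := by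
  intro x hx y _ hxy
  simp only [gaussianPDFReal, sub_zero]
  gcongr

lemma ofReal_mul_gaussianPDFReal_le_gaussianReal_Ici {v : NNReal} (hv : v ≠ 0) {a b : ℝ}
    (ha : 0 ≤ a) (hab : a ≤ b) :
    ENNReal.ofReal ((b - a) * gaussianPDFReal 0 v b) ≤ gaussianReal 0 v (Ici a) := by
  calc ENNReal.ofReal ((b - a) * gaussianPDFReal 0 v b)
      = ∫⁻ _ in Icc a b, ENNReal.ofReal (gaussianPDFReal 0 v b) := by
        rw [setLIntegral_const, Real.volume_Icc, ENNReal.ofReal_mul (sub_nonneg.2 hab), mul_comm]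
    _ ≤ ∫⁻ x in Icc a b, gaussianPDF 0 v x :=
        setLIntegral_mono' measurableSet_Icc fun x hx =>
          ENNReal.ofReal_le_ofReal <| gaussianPDFReal_zero_antitoneOn v
            (mem_Ici.2 (ha.trans hx.1)) (mem_Ici.2 (ha.trans hab)) hx.2
    _ ≤ ∫⁻ x in Ici a, gaussianPDF 0 v x := lintegral_mono_set Icc_subset_Ici_self
    _ = gaussianReal 0 v (Ici a) := (gaussianReal_apply 0 hv _).symm

lemma gaussianReal_zero_sq_Ici_mul {τ : ℝ} (hτ : 0 < τ) (β : ℝ) :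
    gaussianReal 0 (τ ^ 2).toNNReal (Ici (β * τ)) = gaussianReal 0 1 (Ici β) := by
  have hmap : (gaussianReal 0 1).map (τ * ·) = gaussianReal 0 (τ ^ 2).toNNReal := by
    rw [gaussianReal_map_const_mul, mul_zero, mul_one, Real.toNNReal_of_nonneg (sq_nonneg τ)]
  rw [← hmap, Measure.map_apply (measurable_const_mul τ) measurableSet_Ici]
  congr 1
  ext x
  simp [mul_comm β, mul_le_mul_iff_right₀ hτ]

lemma exp_neg_sq_div_le_gaussianReal_Ici {β : ℝ} (hβ : 0 ≤ β) :
    ENNReal.ofReal (Real.exp (-β ^ 2) / (4 * Real.sqrt Real.pi)) ≤ gaussianReal 0 1 (Ici β) := by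
  refine le_trans (ENNReal.ofReal_le_ofReal ?_) (ofReal_mul_gaussianPDFReal_le_gaussianReal_Ici
    one_ne_zero hβ (le_add_of_nonneg_right zero_le_one))
  have he : Real.exp 1 * Real.sqrt 2 ≤ 4 := by
    refine (pow_le_pow_iff_left₀ (by positivity) (by norm_num) two_ne_zero).1 ?_
    rw [mul_pow, Real.sq_sqrt zero_le_two]
    nlinarith [Real.exp_one_lt_d9, Real.exp_pos 1]
  have hsπ : 0 < Real.sqrt Real.pi := Real.sqrt_pos.2 Real.pi_pos
  simp only [gaussianPDFReal, NNReal.coe_one, mul_one, sub_zero, add_sub_cancel_left, one_mul,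
    Real.sqrt_mul zero_le_two Real.pi]
  rw [div_le_iff₀ (by positivity)]
  calc Real.exp (-β ^ 2) ≤ Real.exp 1 * Real.exp (-(β + 1) ^ 2 / 2) := by
        rw [← Real.exp_add]
        exact Real.exp_le_exp.2 (by nlinarith [sq_nonneg (β - 1)])
    _ ≤ 4 / Real.sqrt 2 * Real.exp (-(β + 1) ^ 2 / 2) := by
        gcongr
        exact (le_div_iff₀ (by positivity)).2 he
    _ = _ := by field_simp

lemma gaussianReal_Iio_mul_le {τ β : ℝ} (hτ : 0 < τ) (hβ : 1 ≤ β) :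
    gaussianReal 0 (τ ^ 2).toNNReal (Iio (β * τ)) ≤
      ENNReal.ofReal (1 - Real.exp (-β ^ 2) / (4 * Real.sqrt Real.pi * β)) := by
  have htail : ENNReal.ofReal (Real.exp (-β ^ 2) / (4 * Real.sqrt Real.pi * β)) ≤
      gaussianReal 0 (τ ^ 2).toNNReal (Ici (β * τ)) := by
    rw [gaussianReal_zero_sq_Ici_mul hτ]
    refine le_trans (ENNReal.ofReal_le_ofReal ?_)
      (exp_neg_sq_div_le_gaussianReal_Ici (by linarith))
    have hsπ : 0 < Real.sqrt Real.pi := Real.sqrt_pos.2 Real.pi_pos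
    exact div_le_div_of_nonneg_left (Real.exp_pos _).le (by positivity)
      (le_mul_of_one_le_right (by positivity) hβ)
  rw [← compl_Ici, prob_compl_eq_one_sub measurableSet_Ici, ENNReal.ofReal_sub _ (by positivity),
    ENNReal.ofReal_one]
  exact tsub_le_tsub_left htail 1

end ProbabilityTheory

lemma ofReal_one_sub_pow_card_le_measure_exists {Ω ι : Type*} [MeasurableSpace Ω]
    {P : Measure Ω} [IsProbabilityMeasure P] [Fintype ι] {U : ι → Ω → ℝ} (hU : iIndepFun U P)
    {c q : ℝ} (hq : 0 ≤ q) (h : ∀ i, P (U i ⁻¹' Iio c) ≤ ENNReal.ofReal q) :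
    ENNReal.ofReal (1 - q ^ Fintype.card ι) ≤ P {ω | ∃ i, c ≤ U i ω} := by
  set A := {ω | ∃ i, c ≤ U i ω}
  have hcompl : Aᶜ = ⋂ i, U i ⁻¹' Iio c := by ext; simp [A]
  have hmiss : P Aᶜ ≤ ENNReal.ofReal (q ^ Fintype.card ι) := by
    rw [hcompl, hU.meas_iInter fun i => ⟨Iio c, measurableSet_Iio, rfl⟩,
      ENNReal.ofReal_pow hq, ← Finset.card_univ, ← Finset.prod_const]
    exact Finset.prod_le_prod' fun i _ => h i
  have hsplit : 1 ≤ P A + P Aᶜ := by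
    simpa using measure_univ_le_add_compl (μ := P) A
  calc ENNReal.ofReal (1 - q ^ Fintype.card ι) = 1 - ENNReal.ofReal (q ^ Fintype.card ι) := by
        rw [ENNReal.ofReal_sub _ (by positivity), ENNReal.ofReal_one]
    _ ≤ 1 - P Aᶜ := tsub_le_tsub_left hmiss 1
    _ ≤ P A := tsub_le_iff_right.2 hsplit

lemma pow_le_of_log_div_log_le {x δ : ℝ} {N : ℕ} (hx0 : 0 < x) (hx1 : x < 1) (hδ : 0 < δ)
    (hN : Real.log δ / Real.log x ≤ N) : x ^ N ≤ δ := by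
  rw [← Real.log_le_log_iff (by positivity) hδ, Real.log_pow]
  exact (div_le_iff_of_neg (Real.log_neg hx0 hx1)).1 hN

lemma exp_neg_sq_div_mem_Ioo {β : ℝ} (hβ : 1 ≤ β) :
    Real.exp (-β ^ 2) / (4 * Real.sqrt Real.pi * β) ∈ Ioo 0 1 := by
  have hsπ : 1 ≤ Real.sqrt Real.pi := Real.one_le_sqrt.2 (by linarith [Real.pi_gt_three])
  have hden : 1 < 4 * Real.sqrt Real.pi * β := by nlinarith
  refine ⟨by positivity, (div_lt_one (by linarith)).2 ?_⟩
  exact (Real.exp_le_one_iff.2 (by nlinarith)).trans_lt hden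

/-- Sufficient ensemble size for optimism: with `p = exp(-β²)/(4√π β)` (so
`0 < p < 1`), if `U_1, …, U_N` are i.i.d. `N(0, τ²)` and
`N ≥ log δ / log (1 - p)`, then `P(max_n U_n ≥ β τ) ≥ 1 - δ`. -/
theorem stmt_7 {Ω : Type*} {m0 : MeasurableSpace Ω}
    (P : Measure Ω) [IsProbabilityMeasure P]
    (τ β δ : ℝ) (hτ : 0 < τ) (hβ : 1 ≤ β) (hδ : δ ∈ Set.Ioo (0:ℝ) 1)
    (p : ℝ) (hp : p = Real.exp (-β ^ 2) / (4 * Real.sqrt Real.pi * β))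
    (N : ℕ) (U : Fin N → Ω → ℝ)
    (hindep : iIndepFun U P)
    (hgauss : ∀ n : Fin N,
      Measure.map (U n) P = gaussianReal 0 (Real.toNNReal (τ ^ 2)))
    (hN : Real.log δ / Real.log (1 - p) ≤ (N : ℝ)) :
    0 < p ∧ p < 1 ∧
      ENNReal.ofReal (1 - δ) ≤ P {ω | ∃ n : Fin N, β * τ ≤ U n ω} := by
  obtain ⟨hp0, hp1⟩ : 0 < p ∧ p < 1 := hp ▸ exp_neg_sq_div_mem_Ioo hβ
  refine ⟨hp0, hp1, ?_⟩
  have hmiss : ∀ n, P (U n ⁻¹' Iio (β * τ)) ≤ ENNReal.ofReal (1 - p) := fun n => by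
    have hUn : AEMeasurable (U n) P := .of_map_ne_zero (hgauss n ▸ IsProbabilityMeasure.ne_zero _)
    rw [← Measure.map_apply_of_aemeasurable hUn measurableSet_Iio, hgauss n, hp]
    exact gaussianReal_Iio_mul_le hτ hβ
  have hpow : (1 - p) ^ N ≤ δ := pow_le_of_log_div_log_le (by linarith) (by linarith) hδ.1 hN
  calc ENNReal.ofReal (1 - δ) ≤ ENNReal.ofReal (1 - (1 - p) ^ Fintype.card (Fin N)) := by
        rw [Fintype.card_fin]
        exact ENNReal.ofReal_le_ofReal (by linarith)
    _ ≤ _ := ofReal_one_sub_pow_card_le_measure_exists hindep (by linarith) hmiss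
end
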